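/- arXiv:1603.08559 — 2 statements merged into one kernel-verified Lean document; each statement's English description precedes it below -/
import Mathlib

section
/- Let Ω ⊂ ℝ^d be a bounded domain, δ ∈ (0,1], and let l_{±1},…,l_{±m} ∈ B̄_1 ⊂ ℝ^d satisfy l_{−j} = −l_j and Span{l_j} = ℝ^d. Then there exists a function Ψ_0 ∈ C^∞(ℝ^d) such that Ψ_0 ≥ 1 on Ω, and for every choice of numbers a_j with δ ≤ a_j ≤ δ^{−1} (|j| = 1,…,m) one has Σ_{|j|=1}^m a_j D²_{l_j}Ψ_0 + δ^{−1} Σ_{|j|=1}^m |D_{l_j}Ψ_0| ≤ −2 everywhere in Ω; moreover there exists h_0 > 0 such that for all h ∈ (0,h_0) and all such (a_j), Σ_{|j|=1}^m a_j Δ_{h,l_j}Ψ_0 + δ^{−1} Σ_{|j|=1}^m |δ_{h,l_j}Ψ_0| ≤ −1 everywhere in Ω^h. -/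
open scoped BigOperators NNReal
open MeasureTheory Metric Set

noncomputable section

/-- `ℝ^d` with Euclidean norm. -/
abbrev V (d : ℕ) := EuclideanSpace ℝ (Fin d)

/-- Index set `{±1, …, ±m}`: `inl` are the positive indices, `inr` the negative ones. -/
abbrev SIdx (m : ℕ) := Fin m ⊕ Fin m

/-- The map `k ↦ -k` on the index set `{±1, …, ±m}`. -/
def negIdx {m : ℕ} : SIdx m → SIdx m := Sum.elim Sum.inr Sum.inl

/-- The space of variables `z = (z'_0, z'_{±1..±m}, z''_{±1..±m})`. -/
abbrev Zs (m : ℕ) := ℝ × (SIdx m → ℝ) × (SIdx m → ℝ)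

/-- Euclidean norm of the vector `z' = (t, b) ∈ ℝ^{2m+1}`. -/
def zpnorm {m : ℕ} (t : ℝ) (b : SIdx m → ℝ) : ℝ := Real.sqrt (t ^ 2 + ∑ j, b j ^ 2)

/-- Euclidean norm of `z ∈ ℝ^{4m+1}`. -/
def znormZ {m : ℕ} (z : Zs m) : ℝ :=
  Real.sqrt (z.1 ^ 2 + ∑ j, z.2.1 j ^ 2 + ∑ j, z.2.2 j ^ 2)

/-- First-order finite difference `δ_{h,l}φ(x)`. -/
def fdiff {d : ℕ} (h : ℝ) (l : V d) (φ : V d → ℝ) (x : V d) : ℝ := (φ (x + h • l) - φ x) / h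

/-- Second-order finite difference `Δ_{h,l}φ(x)`. -/
def sdiff {d : ℕ} (h : ℝ) (l : V d) (φ : V d → ℝ) (x : V d) : ℝ :=
  (φ (x + h • l) - 2 * φ x + φ (x - h • l)) / h ^ 2

/-- `Ω^h = {x : dist(x, Ωᶜ) > h}`. -/
def intH {d : ℕ} (Ω : Set (V d)) (h : ℝ) : Set (V d) := {x | h < infDist x Ωᶜ}

/-- `∂_hΩ = Ω̄ \ Ω^h`. -/
def bdryH {d : ℕ} (Ω : Set (V d)) (h : ℝ) : Set (V d) := closure Ω \ intH Ω h

/-- The finite-difference operator `H_h[v](x)`. -/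
def Hop {d m : ℕ} (H : Zs m → V d → ℝ) (l : SIdx m → V d) (h : ℝ) (v : V d → ℝ)
    (x : V d) : ℝ :=
  H (v x, fun j => fdiff h (l j) v x, fun j => sdiff h (l j) v x) x

/-- Assumption A(H) with constants `δ`, `N'`: Lipschitz in `z`, `H(0,·)` bounded, and at points
of differentiability in `z`: `δ ≤ D_{z''_j}H ≤ δ⁻¹`, `|D_{z'_j}H| ≤ N'`, `D_{z'_0}H ≤ 0`. -/
def AssumpA {d m : ℕ} (δ N' : ℝ) (Ω : Set (V d)) (H : Zs m → V d → ℝ) : Prop :=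
  (∀ x ∈ closure Ω, ∃ C : ℝ≥0, LipschitzWith C fun z => H z x) ∧
  (∃ C : ℝ, ∀ x ∈ closure Ω, |H 0 x| ≤ C) ∧
  ∀ (z : Zs m), ∀ x ∈ closure Ω, DifferentiableAt ℝ (fun z => H z x) z →
    (∀ j : SIdx m,
      δ ≤ fderiv ℝ (fun z => H z x) z (0, 0, Pi.single j 1) ∧
      fderiv ℝ (fun z => H z x) z (0, 0, Pi.single j 1) ≤ δ⁻¹ ∧
      |fderiv ℝ (fun z => H z x) z (0, Pi.single j 1, 0)| ≤ N') ∧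
    fderiv ℝ (fun z => H z x) z (1, 0, 0) ≤ 0

/-- `P(z'') = max_{δ/2 ≤ a_k ≤ 2δ⁻¹} Σ_k a_k z''_k`. -/
def Pcut {m : ℕ} (δ : ℝ) (z'' : SIdx m → ℝ) : ℝ :=
  ⨆ a : {a : SIdx m → ℝ // ∀ k, δ / 2 ≤ a k ∧ a k ≤ 2 * δ⁻¹},
    ∑ k, (a : SIdx m → ℝ) k * z'' k

/-- The cut-off operator `H_K(z,x) = max(H(z,x), P(z'') - K)`. -/
def HKcut {d m : ℕ} (δ K : ℝ) (H : Zs m → V d → ℝ) (z : Zs m) (x : V d) : ℝ :=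
  max (H z x) (Pcut δ z.2.2 - K)

/-- Exterior ball condition with radius `ρ`. -/
def ExtBall {d : ℕ} (Ω : Set (V d)) (ρ : ℝ) : Prop :=
  ∀ x₀ ∈ frontier Ω, ∃ y, y ∉ Ω ∧ closedBall y ρ ∩ closure Ω = {x₀}

/-- Directional derivative `D_l φ`. -/
def dirD {d : ℕ} (l : V d) (φ : V d → ℝ) (x : V d) : ℝ := fderiv ℝ φ x l

/-- Second directional derivative `D²_l φ = D_l (D_l φ)`. -/
def dirD2 {d : ℕ} (l : V d) (φ : V d → ℝ) (x : V d) : ℝ := dirD l (dirD l φ) x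

/-- The space of `d×d` matrices with Euclidean (Frobenius) norm. -/
abbrev Mat (d : ℕ) := EuclideanSpace ℝ (Fin d × Fin d)

/-- View a function `Fin d × Fin d → ℝ` as an element of `Mat d`. -/
def toMat {d : ℕ} (f : Fin d × Fin d → ℝ) : Mat d := WithLp.toLp 2 f

/-- View a function `Fin n → ℝ` as an element of `EuclideanSpace ℝ (Fin n)`. -/
def toE {n : ℕ} (f : Fin n → ℝ) : EuclideanSpace ℝ (Fin n) := WithLp.toLp 2 f

/-- The quadratic form `⟨a ξ, ξ⟩ = Σ_{i,j} a_{ij} ξ_i ξ_j`. -/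
def quadF {d : ℕ} (a : Mat d) (ξ : Fin d → ℝ) : ℝ := ∑ i, ∑ j, a (i, j) * ξ i * ξ j

/-- `S_δ`: the symmetric matrices with `δ|ξ|² ≤ ⟨aξ,ξ⟩ ≤ δ⁻¹|ξ|²`. -/
def SdeltaSet (d : ℕ) (δ : ℝ) : Set (Mat d) :=
  {a | (∀ i j, a (i, j) = a (j, i)) ∧
    ∀ ξ : Fin d → ℝ, δ * ∑ i, ξ i ^ 2 ≤ quadF a ξ ∧ quadF a ξ ≤ δ⁻¹ * ∑ i, ξ i ^ 2}

/-- `P(u'') = max_{δ̂/2 ≤ a_k ≤ 2δ̂⁻¹} Σ_k a_k ⟨u'' l_k, l_k⟩`. -/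
def PMat {d m : ℕ} (δh : ℝ) (l : SIdx m → V d) (w : Mat d) : ℝ :=
  ⨆ a : {a : SIdx m → ℝ // ∀ k, δh / 2 ≤ a k ∧ a k ≤ 2 * δh⁻¹},
    ∑ k, (a : SIdx m → ℝ) k * quadF w (fun i => l k i)

/-- The vector `u' = (u'_0, u'_1, …, u'_d) ∈ ℝ^{d+1}` built from `t ∈ ℝ` and `p ∈ ℝ^d`. -/
def primeVec {d : ℕ} (t : ℝ) (p : Fin d → ℝ) : EuclideanSpace ℝ (Fin (d + 1)) :=
  toE (Fin.cons t p)

/-- Update the coordinate `i` of a vector in `ℝ^n`. -/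
def updE {n : ℕ} (u : EuclideanSpace ℝ (Fin n)) (i : Fin n) (t : ℝ) :
    EuclideanSpace ℝ (Fin n) := toE (Function.update (fun j => u j) i t)

/-- The gradient `Dv(x)` of `v : ℝ^d → ℝ` as a vector in `ℝ^d`. -/
def gradV {d : ℕ} (v : V d → ℝ) (x : V d) : Fin d → ℝ :=
  fun i => fderiv ℝ v x (EuclideanSpace.single i 1)

/-- Entry `(i,j)` of the Hessian `D²v(x)`. -/
def hessE {d : ℕ} (v : V d → ℝ) (x : V d) (i j : Fin d) : ℝ :=
  fderiv ℝ (fun y => fderiv ℝ v y (EuclideanSpace.single j 1)) x (EuclideanSpace.single i 1)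

/-- The Hessian `D²v(x)` as an element of `Mat d`. -/
def hessM {d : ℕ} (v : V d → ℝ) (x : V d) : Mat d := toMat fun p => hessE v x p.1 p.2

/-!
The barrier is `Ψ₀(x) = N - A exp (μ ⟪e, x⟫)` for a direction `e = l_{j₀} ≠ 0`, which exists
because the `l_j` span. Along `l` one has `D_l Ψ₀ = -A μ ⟪e, l⟫ exp (μ ⟪e, x⟫)` and
`D²_l Ψ₀ = -A μ² ⟪e, l⟫² exp (μ ⟪e, x⟫)`; the finite differences satisfy the same bounds, up to
a factor `2` in the first-order term, by `s² ≤ eˢ - 2 + e⁻ˢ` and by `|eˢ - 1| ≤ 2 |s|` for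
`|s| ≤ 1` (this is where `h < 1 / μ` enters). As `κ = Σ_j ⟪e, l_j⟫² > 0`, the second-order term
`-δ A μ² κ exp (μ ⟪e, x⟫)` dominates the first-order ones, of order `δ⁻¹ m A μ exp (μ ⟪e, x⟫)`,
once `μ` is large. Finally `A` is chosen with `A exp (μ ⟪e, x⟫) ≥ 2` on the bounded set `Ω`, and
`N` so that `Ψ₀ ≥ 1` there.
-/

open scoped RealInnerProductSpace
open Real

theorem sq_le_exp_sub_two_add_exp_neg (s : ℝ) : s ^ 2 ≤ exp s - 2 + exp (-s) := by
  have hsinh : |s / 2| ≤ |sinh (s / 2)| := by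
    rw [abs_sinh]
    exact self_le_sinh_iff.2 (abs_nonneg _)
  have hsq : exp s - 2 + exp (-s) = (2 * sinh (s / 2)) ^ 2 := by
    have hpos : exp s = exp (s / 2) ^ 2 := by rw [sq, ← exp_add, add_halves]
    have hneg : exp (-s) = exp (-(s / 2)) ^ 2 := by rw [sq, ← exp_add]; ring_nf
    have hprod : exp (s / 2) * exp (-(s / 2)) = 1 := by rw [← exp_add, add_neg_cancel, exp_zero]
    rw [sinh_eq, hpos, hneg]
    linear_combination 2 * hprod
  rw [abs_div, abs_two] at hsinh
  rw [hsq, sq_le_sq, abs_mul, abs_two]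
  linarith

theorem Submodule.exists_ne_zero_of_span_range_eq_top {R M ι : Type*} [Semiring R]
    [AddCommMonoid M] [Module R M] [Nontrivial M] {l : ι → M}
    (hspan : span R (range l) = ⊤) : ∃ j, l j ≠ 0 := by
  by_contra! hzero
  have hbot : span R (range l) = ⊥ := by
    rw [span_eq_bot]
    rintro _ ⟨j, rfl⟩
    exact hzero j
  exact bot_ne_top (hbot.symm.trans hspan)

theorem Bornology.IsBounded.exists_abs_inner_le {E : Type*} [NormedAddCommGroup E]
    [InnerProductSpace ℝ E] {s : Set E} (hs : IsBounded s) (w : E) :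
    ∃ R, ∀ x ∈ s, |⟪w, x⟫| ≤ R := by
  obtain ⟨C, hC⟩ := hs.exists_norm_le
  exact ⟨‖w‖ * C, fun x hx =>
    (abs_real_inner_le_norm w x).trans (mul_le_mul_of_nonneg_left (hC x hx) (norm_nonneg w))⟩

theorem exists_forall_abs_inner_le_and_add_one_le_sum_inner_sq {E ι : Type*}
    [NormedAddCommGroup E] [InnerProductSpace ℝ E] [Fintype ι] {δ : ℝ} (hδ : 0 < δ)
    {l : ι → E} (hl : ∀ j, ‖l j‖ ≤ 1) {j₀ : ι} (hj₀ : l j₀ ≠ 0) :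
    ∃ w : E, ∃ M > 0, (∀ j, |⟪w, l j⟫| ≤ M) ∧
      δ⁻¹ * (2 * Fintype.card ι * M) + 1 ≤ δ * ∑ j, ⟪w, l j⟫ ^ 2 := by
  set κ := ∑ j, ⟪l j₀, l j⟫ ^ 2
  have hκ : 0 < κ :=
    (pow_pos (real_inner_self_pos.2 hj₀) 2).trans_le
      (Finset.single_le_sum (f := fun j => ⟪l j₀, l j⟫ ^ 2) (fun j _ => sq_nonneg _)
        (Finset.mem_univ j₀))
  set p := δ⁻¹ * (2 * Fintype.card ι)
  set μ := max 1 ((p + 1) / (δ * κ))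
  have hμ1 : 1 ≤ μ := le_max_left _ _
  have hμκ : p + 1 ≤ δ * κ * μ := (div_le_iff₀' (by positivity)).1 (le_max_right _ _)
  refine ⟨μ • l j₀, μ, by positivity, fun j => ?_, ?_⟩
  · rw [real_inner_smul_left, abs_mul, abs_of_pos (by positivity)]
    have := (abs_real_inner_le_norm (l j₀) (l j)).trans
      (mul_le_one₀ (hl j₀) (norm_nonneg _) (hl j))
    nlinarith
  · simp only [real_inner_smul_left, mul_pow, ← Finset.mul_sum]
    nlinarith

theorem intH_subset {d : ℕ} {Ω : Set (V d)} {h : ℝ} (hh : 0 ≤ h) : intH Ω h ⊆ Ω := by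
  intro x hx
  by_contra hxΩ
  have hx' : h < infDist x Ωᶜ := hx
  rw [infDist_zero_of_mem hxΩ] at hx'
  exact hx'.not_ge hh

theorem sum_mul_add_inv_mul_sum_abs_le {ι : Type*} [Fintype ι] {δ c G M : ℝ}
    {a S F b : ι → ℝ} (hδ : 0 < δ) (ha : ∀ j, δ ≤ a j) (hc : c ≤ 0) (hG : 0 ≤ G)
    (hb : ∀ j, |b j| ≤ M) (hS : ∀ j, S j ≤ c * b j ^ 2 * G)
    (hF : ∀ j, |F j| ≤ 2 * |c| * |b j| * G)
    (hdom : δ⁻¹ * (2 * Fintype.card ι * M) + 1 ≤ δ * ∑ j, b j ^ 2) :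
    ∑ j, a j * S j + δ⁻¹ * ∑ j, |F j| ≤ c * G := by
  have hcG : c * G ≤ 0 := mul_nonpos_of_nonpos_of_nonneg hc hG
  have hsecond : ∑ j, a j * S j ≤ δ * (c * G) * ∑ j, b j ^ 2 := by
    rw [Finset.mul_sum]
    refine Finset.sum_le_sum fun j _ => ?_
    have hSj : S j ≤ 0 := (hS j).trans (by nlinarith [sq_nonneg (b j)])
    calc a j * S j ≤ δ * S j := mul_le_mul_of_nonpos_right (ha j) hSj
      _ ≤ δ * (c * b j ^ 2 * G) := mul_le_mul_of_nonneg_left (hS j) hδ.le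
      _ = δ * (c * G) * b j ^ 2 := by ring
  have hfirst : ∑ j, |F j| ≤ Fintype.card ι * (2 * -c * M * G) := by
    calc ∑ j, |F j| ≤ ∑ _j : ι, 2 * |c| * M * G :=
          Finset.sum_le_sum fun j _ => (hF j).trans (by gcongr; exact hb j)
      _ = Fintype.card ι * (2 * -c * M * G) := by
          rw [Finset.sum_const, Finset.card_univ, nsmul_eq_mul, abs_of_nonpos hc]
  have := mul_le_mul_of_nonneg_left hfirst (inv_nonneg.2 hδ.le)
  have := mul_le_mul_of_nonpos_left hdom hcG
  linarith

section ExpBarrier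

variable {d : ℕ} (N c h : ℝ) (w l x : V d)

theorem hasFDerivAt_exp_inner :
    HasFDerivAt (fun y : V d => exp ⟪w, y⟫) (exp ⟪w, x⟫ • innerSL ℝ w) x :=
  (hasDerivAt_exp _).comp_hasFDerivAt x (innerSL ℝ w).hasFDerivAt

theorem dirD_const_add (φ : V d → ℝ) : dirD l (fun y => N + φ y) = dirD l φ := by
  funext x
  simp only [dirD, fderiv_const_add]

theorem dirD_mul_exp_inner :
    dirD l (fun y => c * exp ⟪w, y⟫) = fun x => c * ⟪w, l⟫ * exp ⟪w, x⟫ := by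
  funext x
  rw [dirD, ((hasFDerivAt_exp_inner w x).const_mul c).fderiv]
  simp only [smul_apply, innerSL_apply_apply, smul_eq_mul]
  ring

theorem dirD2_const_add_mul_exp_inner :
    dirD2 l (fun y => N + c * exp ⟪w, y⟫) x = c * ⟪w, l⟫ ^ 2 * exp ⟪w, x⟫ := by
  rw [dirD2, dirD_const_add, dirD_mul_exp_inner, dirD_mul_exp_inner]
  ring

theorem abs_dirD_const_add_mul_exp_inner :
    |dirD l (fun y => N + c * exp ⟪w, y⟫) x| = |c| * |⟪w, l⟫| * exp ⟪w, x⟫ := by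
  rw [dirD_const_add, dirD_mul_exp_inner, abs_mul, abs_mul, abs_of_pos (exp_pos _)]

theorem exp_inner_add_smul (t : ℝ) :
    exp ⟪w, x + t • l⟫ = exp ⟪w, x⟫ * exp (t * ⟪w, l⟫) := by
  rw [inner_add_right, real_inner_smul_right, exp_add]

theorem fdiff_const_add_mul_exp_inner :
    fdiff h l (fun y => N + c * exp ⟪w, y⟫) x =
      c * exp ⟪w, x⟫ * (exp (h * ⟪w, l⟫) - 1) / h := by
  simp only [fdiff, exp_inner_add_smul]
  ring

theorem sdiff_const_add_mul_exp_inner :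
    sdiff h l (fun y => N + c * exp ⟪w, y⟫) x =
      c * exp ⟪w, x⟫ * (exp (h * ⟪w, l⟫) - 2 + exp (-(h * ⟪w, l⟫))) / h ^ 2 := by
  rw [sdiff.eq_1]
  simp only [sub_eq_add_neg x, ← neg_smul, exp_inner_add_smul, neg_mul]
  ring

theorem sdiff_const_add_mul_exp_inner_le (hc : c ≤ 0) (hh : h ≠ 0) :
    sdiff h l (fun y => N + c * exp ⟪w, y⟫) x ≤ c * ⟪w, l⟫ ^ 2 * exp ⟪w, x⟫ := by
  rw [sdiff_const_add_mul_exp_inner, div_le_iff₀ (by positivity)]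
  have hcE : c * exp ⟪w, x⟫ ≤ 0 := mul_nonpos_of_nonpos_of_nonneg hc (exp_pos _).le
  calc c * exp ⟪w, x⟫ * (exp (h * ⟪w, l⟫) - 2 + exp (-(h * ⟪w, l⟫)))
      ≤ c * exp ⟪w, x⟫ * (h * ⟪w, l⟫) ^ 2 :=
        mul_le_mul_of_nonpos_left (sq_le_exp_sub_two_add_exp_neg _) hcE
    _ = c * ⟪w, l⟫ ^ 2 * exp ⟪w, x⟫ * h ^ 2 := by ring

theorem abs_fdiff_const_add_mul_exp_inner_le (hh : 0 < h) (hhl : h * |⟪w, l⟫| ≤ 1) :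
    |fdiff h l (fun y => N + c * exp ⟪w, y⟫) x| ≤ 2 * |c| * |⟪w, l⟫| * exp ⟪w, x⟫ := by
  rw [fdiff_const_add_mul_exp_inner, abs_div, abs_mul, abs_mul, abs_of_pos (exp_pos _),
    abs_of_pos hh, div_le_iff₀ hh]
  have hexp := abs_exp_sub_one_le (x := h * ⟪w, l⟫) (by rwa [abs_mul, abs_of_pos hh])
  calc |c| * exp ⟪w, x⟫ * |exp (h * ⟪w, l⟫) - 1|
      ≤ |c| * exp ⟪w, x⟫ * (2 * |h * ⟪w, l⟫|) := by gcongr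
    _ = 2 * |c| * |⟪w, l⟫| * exp ⟪w, x⟫ * h := by rw [abs_mul, abs_of_pos hh]; ring

end ExpBarrier

section BarrierEstimates

variable {d : ℕ} {ι : Type*} [Fintype ι] {δ c M : ℝ} {w : V d} {l : ι → V d} {a : ι → ℝ}

theorem sum_mul_dirD2_add_inv_mul_sum_abs_dirD_le (hδ : 0 < δ) (ha : ∀ j, δ ≤ a j)
    (hc : c ≤ 0) (hM : ∀ j, |⟪w, l j⟫| ≤ M)
    (hdom : δ⁻¹ * (2 * Fintype.card ι * M) + 1 ≤ δ * ∑ j, ⟪w, l j⟫ ^ 2) (N : ℝ) (x : V d) :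
    ∑ j, a j * dirD2 (l j) (fun y => N + c * exp ⟪w, y⟫) x +
        δ⁻¹ * ∑ j, |dirD (l j) (fun y => N + c * exp ⟪w, y⟫) x| ≤ c * exp ⟪w, x⟫ :=
  sum_mul_add_inv_mul_sum_abs_le hδ ha hc (exp_pos _).le hM
    (fun j => (dirD2_const_add_mul_exp_inner N c (w := w) (l j) x).le)
    (fun j => by
      rw [abs_dirD_const_add_mul_exp_inner]
      have : 0 ≤ |c| * |⟪w, l j⟫| * exp ⟪w, x⟫ := by positivity
      linarith)
    hdom

theorem sum_mul_sdiff_add_inv_mul_sum_abs_fdiff_le (hδ : 0 < δ) (ha : ∀ j, δ ≤ a j)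
    (hc : c ≤ 0) (hM : ∀ j, |⟪w, l j⟫| ≤ M)
    (hdom : δ⁻¹ * (2 * Fintype.card ι * M) + 1 ≤ δ * ∑ j, ⟪w, l j⟫ ^ 2) {h : ℝ} (hh : 0 < h)
    (hhM : h * M ≤ 1) (N : ℝ) (x : V d) :
    ∑ j, a j * sdiff h (l j) (fun y => N + c * exp ⟪w, y⟫) x +
        δ⁻¹ * ∑ j, |fdiff h (l j) (fun y => N + c * exp ⟪w, y⟫) x| ≤ c * exp ⟪w, x⟫ :=
  sum_mul_add_inv_mul_sum_abs_le hδ ha hc (exp_pos _).le hM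
    (fun j => sdiff_const_add_mul_exp_inner_le N c h w (l j) x hc hh.ne')
    (fun j => abs_fdiff_const_add_mul_exp_inner_le N c h w (l j) x hh
      ((mul_le_mul_of_nonneg_left (hM j) hh.le).trans hhM))
    hdom

end BarrierEstimates

theorem stmt_4_general (d m : ℕ) (hd : 1 ≤ d) (δ : ℝ) (hδ : δ ∈ Set.Ioc (0:ℝ) 1)
    (Ω : Set (V d)) (hΩb : Bornology.IsBounded Ω)
    (l : SIdx m → V d) (hl1 : ∀ k, ‖l k‖ ≤ 1)
    (hspan : Submodule.span ℝ (Set.range l) = ⊤) :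
    ∃ Ψ : V d → ℝ, ContDiff ℝ (⊤ : ℕ∞) Ψ ∧ (∀ x ∈ Ω, 1 ≤ Ψ x) ∧
      (∀ a : SIdx m → ℝ, (∀ j, δ ≤ a j ∧ a j ≤ δ⁻¹) → ∀ x ∈ Ω,
        ∑ j, a j * dirD2 (l j) Ψ x + δ⁻¹ * ∑ j, |dirD (l j) Ψ x| ≤ -2) ∧
      ∃ h₀ > (0:ℝ), ∀ h ∈ Set.Ioo (0:ℝ) h₀, ∀ a : SIdx m → ℝ,
        (∀ j, δ ≤ a j ∧ a j ≤ δ⁻¹) → ∀ x ∈ intH Ω h,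
          ∑ j, a j * sdiff h (l j) Ψ x + δ⁻¹ * ∑ j, |fdiff h (l j) Ψ x| ≤ -1 := by
  have : Nonempty (Fin d) := ⟨⟨0, hd⟩⟩
  obtain ⟨j₀, hj₀⟩ := Submodule.exists_ne_zero_of_span_range_eq_top hspan
  obtain ⟨w, M, hM0, hM, hdom⟩ :=
    exists_forall_abs_inner_le_and_add_one_le_sum_inner_sq hδ.1 hl1 hj₀
  obtain ⟨R, hR⟩ := hΩb.exists_abs_inner_le w
  set A := 2 * exp R
  have hA : ∀ x ∈ Ω, 2 ≤ A * exp ⟪w, x⟫ ∧ A * exp ⟪w, x⟫ ≤ A * exp R := by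
    intro x hx
    obtain ⟨hlow, hup⟩ := abs_le.1 (hR x hx)
    constructor
    · calc 2 = A * exp (-R) := by rw [mul_assoc, ← exp_add, add_neg_cancel, exp_zero, mul_one]
        _ ≤ A * exp ⟪w, x⟫ := by gcongr
    · gcongr
  refine ⟨fun y => (1 + A * exp R) + -A * exp ⟪w, y⟫,
    contDiff_const.add (contDiff_const.mul (contDiff_exp.comp (innerSL ℝ w).contDiff)),
    fun x hx => ?_, fun a ha x hx => ?_, 1 / M, by positivity, fun h hh a ha x hx => ?_⟩
  · linarith [(hA x hx).2]
  · refine (sum_mul_dirD2_add_inv_mul_sum_abs_dirD_le hδ.1 (fun j => (ha j).1)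
      (neg_nonpos.2 (by positivity)) hM hdom _ x).trans ?_
    linarith [(hA x hx).1]
  · have hhM : h * M ≤ 1 := (lt_div_iff₀ hM0).1 hh.2 |>.le
    refine (sum_mul_sdiff_add_inv_mul_sum_abs_fdiff_le hδ.1 (fun j => (ha j).1)
      (neg_nonpos.2 (by positivity)) hM hdom hh.1 hhM _ x).trans ?_
    linarith [(hA x (intH_subset hh.1.le hx)).1]

/-- **Lemma 2.2.** There is `Ψ₀ ∈ C^∞(ℝ^d)`, `Ψ₀ ≥ 1` on `Ω`, with
`Σ a_j D²_{l_j}Ψ₀ + δ⁻¹ Σ |D_{l_j}Ψ₀| ≤ -2` in `Ω` for all `δ ≤ a_j ≤ δ⁻¹`, and for all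
sufficiently small `h`, `Σ a_j Δ_{h,l_j}Ψ₀ + δ⁻¹ Σ |δ_{h,l_j}Ψ₀| ≤ -1` in `Ω^h`. -/
theorem stmt_4 (d m : ℕ) (hd : 1 ≤ d) (hm : 1 ≤ m) (δ : ℝ) (hδ : δ ∈ Set.Ioc (0:ℝ) 1)
    (Ω : Set (V d)) (hΩo : IsOpen Ω) (hΩb : Bornology.IsBounded Ω) (hΩne : Ω.Nonempty)
    (l : SIdx m → V d) (hl1 : ∀ k, ‖l k‖ ≤ 1) (hlneg : ∀ k, l (negIdx k) = -l k)
    (hspan : Submodule.span ℝ (Set.range l) = ⊤) :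
    ∃ Ψ : V d → ℝ, ContDiff ℝ (⊤ : ℕ∞) Ψ ∧ (∀ x ∈ Ω, 1 ≤ Ψ x) ∧
      (∀ a : SIdx m → ℝ, (∀ j, δ ≤ a j ∧ a j ≤ δ⁻¹) → ∀ x ∈ Ω,
        ∑ j, a j * dirD2 (l j) Ψ x + δ⁻¹ * ∑ j, |dirD (l j) Ψ x| ≤ -2) ∧
      ∃ h₀ > (0:ℝ), ∀ h ∈ Set.Ioo (0:ℝ) h₀, ∀ a : SIdx m → ℝ,
        (∀ j, δ ≤ a j ∧ a j ≤ δ⁻¹) → ∀ x ∈ intH Ω h,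
          ∑ j, a j * sdiff h (l j) Ψ x + δ⁻¹ * ∑ j, |fdiff h (l j) Ψ x| ≤ -1 :=
  stmt_4_general d m hd δ hδ Ω hΩb l hl1 hspan
end
end

section
/- Let F : ℝⁿ → ℝ be Lipschitz continuous and let A ⊂ ℝⁿ be a convex, closed, bounded set. Assume there is a set D ⊂ ℝⁿ of full Lebesgue measure such that at every point u ∈ D the function F is differentiable and its gradient DF(u) belongs to A. Then for any u, v ∈ ℝⁿ there exists a ∈ A such that F(u) − F(v) = Σ_i a^i(u^i − v^i); in particular, min_{a∈A} Σ_i a^i(u^i − v^i) ≤ F(u) − F(v) ≤ max_{a∈A} Σ_i a^i(u^i − v^i). -/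
/-! For almost every base point `x`, Fubini shows that almost every point of the line
`t ↦ x + t • w` lies in `D`. Along such a line `t ↦ F (x + t • w)` is Lipschitz, so
`F (x + w) - F x` is the integral over `[0, 1]` of its derivative `⟨DF, w⟩`, whose values lie
a.e. in the compact interval `{⟨a, w⟩ | a ∈ A}`; hence so does the integral. Continuity of `F`
passes this from a dense set of base points to all of them. -/

open scoped BigOperators NNReal
open MeasureTheory Metric Set

noncomputable section

open Filter

lemma ContinuousLinearMap.apply_eq_sum_single_mul {ι : Type*} [Fintype ι] [DecidableEq ι]
    (L : EuclideanSpace ℝ ι →L[ℝ] ℝ) (w : EuclideanSpace ℝ ι) :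
    L w = ∑ i, L (EuclideanSpace.single i 1) * w i := by
  conv_lhs => rw [← (EuclideanSpace.basisFun ι ℝ).sum_repr w]
  simp [mul_comm]

lemma LipschitzWith.sub_le_mul_of_ae_deriv_le {g : ℝ → ℝ} {K : ℝ≥0} (hg : LipschitzWith K g)
    {a b M : ℝ} (hab : a ≤ b) (hM : ∀ᵐ t, deriv g t ≤ M) : g b - g a ≤ M * (b - a) := by
  have hac := (hg.lipschitzOnWith (s := uIcc a b)).absolutelyContinuousOnInterval
  calc g b - g a = ∫ t in a..b, deriv g t := hac.integral_deriv_eq_sub.symm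
    _ ≤ ∫ _ in a..b, M :=
      intervalIntegral.integral_mono_ae hab hac.intervalIntegrable_deriv intervalIntegrable_const hM
    _ = M * (b - a) := by simp [mul_comm]

section LineRestriction

variable {E : Type*} [NormedAddCommGroup E] [NormedSpace ℝ E]

lemma lipschitzWith_line (x w : E) : LipschitzWith ‖w‖₊ fun t : ℝ => x + t • w :=
  LipschitzWith.of_dist_le_mul fun s t => by
    rw [dist_add_left, dist_eq_norm, ← sub_smul, norm_smul, Real.dist_eq, mul_comm]
    rfl

variable [MeasurableSpace E] [BorelSpace E] [SecondCountableTopology E] {μ : Measure E}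
  [μ.IsAddRightInvariant] [SFinite μ]

lemma ae_ae_add_smul_of_ae {p : E → Prop} (hp : ∀ᵐ y ∂μ, p y) (w : E) :
    ∀ᵐ x ∂μ, ∀ᵐ t : ℝ, p (x + t • w) := by
  obtain ⟨N, hpN, hNm, hN0⟩ := exists_measurable_superset_of_null (ae_iff.mp hp)
  have hNline : MeasurableSet {q : E × ℝ | q.1 + q.2 • w ∈ N} :=
    (by fun_prop : Measurable fun q : E × ℝ => q.1 + q.2 • w) hNm
  have hNline0 : (μ.prod volume) {q : E × ℝ | q.1 + q.2 • w ∈ N} = 0 := by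
    have hslice (t : ℝ) : μ {x | x + t • w ∈ N} = 0 :=
      (measure_preimage_add_right μ (t • w) N).trans hN0
    simp [Measure.prod_apply_symm hNline, hslice]
  filter_upwards [Measure.ae_ae_of_ae_prod (measure_eq_zero_iff_ae_notMem.mp hNline0)] with x hx
  filter_upwards [hx] with t ht using by_contra fun h => ht (hpN h)

variable [μ.IsOpenPosMeasure] {F : E → ℝ} {K : ℝ≥0} {w : E}

lemma LipschitzWith.sub_le_of_ae_fderiv_le (hF : LipschitzWith K F) {M : ℝ}
    (hM : ∀ᵐ y ∂μ, DifferentiableAt ℝ F y ∧ fderiv ℝ F y w ≤ M) (x : E) :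
    F (x + w) - F x ≤ M := by
  have hae : ∀ᵐ x ∂μ, F (x + w) - F x ≤ M := by
    filter_upwards [ae_ae_add_smul_of_ae hM w] with x hx
    have hderiv : ∀ᵐ t : ℝ, deriv (fun t : ℝ => F (x + t • w)) t ≤ M := by
      filter_upwards [hx] with t ⟨hdiff, hle⟩
      have hline : HasDerivAt (fun t : ℝ => x + t • w) w t := by
        simpa using ((hasDerivAt_id t).smul_const w).const_add x
      have hcomp : HasDerivAt (fun t : ℝ => F (x + t • w)) (fderiv ℝ F (x + t • w) w) t :=
        hdiff.hasFDerivAt.comp_hasDerivAt t hline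
      rwa [hcomp.deriv]
    simpa using (hF.comp (lipschitzWith_line x w)).sub_le_mul_of_ae_deriv_le zero_le_one hderiv
  have hcont : Continuous fun x => F (x + w) - F x :=
    (hF.continuous.comp (continuous_add_const w)).sub hF.continuous
  exact le_on_closure (fun x hx => hx) hcont.continuousOn continuousOn_const
    ((Measure.dense_of_ae hae).closure_eq ▸ mem_univ x)

lemma LipschitzWith.le_sub_of_ae_le_fderiv (hF : LipschitzWith K F) {m : ℝ}
    (hm : ∀ᵐ y ∂μ, DifferentiableAt ℝ F y ∧ m ≤ fderiv ℝ F y w) (x : E) :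
    m ≤ F (x + w) - F x := by
  have hneg := hF.neg.sub_le_of_ae_fderiv_le (M := -m)
    (hm.mono fun y ⟨hdiff, hle⟩ => ⟨hdiff.neg, by simpa [fderiv_neg] using hle⟩) x
  simp only [Pi.neg_apply] at hneg
  linarith

lemma LipschitzWith.sub_mem_of_ae_fderiv_mem (hF : LipschitzWith K F) {s : Set ℝ}
    (hs : IsCompact s) (hsc : Convex ℝ s)
    (h : ∀ᵐ y ∂μ, DifferentiableAt ℝ F y ∧ fderiv ℝ F y w ∈ s) (x : E) :
    F (x + w) - F x ∈ s := by
  obtain ⟨y, -, hy⟩ := h.exists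
  exact hsc.ordConnected.out (hs.sInf_mem ⟨_, hy⟩) (hs.sSup_mem ⟨_, hy⟩)
    ⟨hF.le_sub_of_ae_le_fderiv (h.mono fun y hy => ⟨hy.1, csInf_le hs.bddBelow hy.2⟩) x,
      hF.sub_le_of_ae_fderiv_le (h.mono fun y hy => ⟨hy.1, le_csSup hs.bddAbove hy.2⟩) x⟩

end LineRestriction

/-- **Lemma 9.1.** If `F : ℝⁿ → ℝ` is Lipschitz and its gradient lies in a convex closed
bounded set `A` on a set of full measure, then every difference `F(u) - F(v)` is realized
by some `a ∈ A`; in particular it lies between the min and the max of `⟨a, u - v⟩` over `A`. -/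
theorem stmt_18 (n : ℕ) (F : EuclideanSpace ℝ (Fin n) → ℝ)
    (hFLip : ∃ C : ℝ≥0, LipschitzWith C F)
    (A : Set (EuclideanSpace ℝ (Fin n))) (hAconv : Convex ℝ A) (hAcl : IsClosed A)
    (hAbd : Bornology.IsBounded A)
    (D : Set (EuclideanSpace ℝ (Fin n))) (hD : volume Dᶜ = 0)
    (hgrad : ∀ u ∈ D, DifferentiableAt ℝ F u ∧
      toE (fun i => fderiv ℝ F u (EuclideanSpace.single i 1)) ∈ A) :
    ∀ u v : EuclideanSpace ℝ (Fin n),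
      (∃ a ∈ A, F u - F v = ∑ i, a i * (u i - v i)) ∧
      sInf {t | ∃ a ∈ A, t = ∑ i, a i * (u i - v i)} ≤ F u - F v ∧
      F u - F v ≤ sSup {t | ∃ a ∈ A, t = ∑ i, a i * (u i - v i)} := by
  obtain ⟨C, hC⟩ := hFLip
  intro u v
  set T := {t | ∃ a ∈ A, t = ∑ i, a i * (u i - v i)}
  set L := innerSL ℝ (u - v)
  have hT : T = L '' A := by
    ext t
    simp [T, L, PiLp.inner_apply, mul_sub, eq_comm]
  have hLA : IsCompact (L '' A) :=
    (Metric.isCompact_of_isClosed_isBounded hAcl hAbd).image L.continuous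
  have hderiv : ∀ᵐ y, DifferentiableAt ℝ F y ∧ fderiv ℝ F y (u - v) ∈ L '' A :=
    Eventually.mono (mem_ae_iff.mpr hD) fun y hy => ⟨(hgrad y hy).1, _, (hgrad y hy).2, by
      rw [(fderiv ℝ F y).apply_eq_sum_single_mul]
      simp [L, toE, PiLp.inner_apply, mul_comm, sub_mul]⟩
  have hmem : F u - F v ∈ L '' A := by
    simpa using hC.sub_mem_of_ae_fderiv_mem hLA (hAconv.linear_image L.toLinearMap) hderiv v
  show F u - F v ∈ T ∧ _
  rw [hT]
  exact ⟨hmem, csInf_le hLA.bddBelow hmem, le_csSup hLA.bddAbove hmem⟩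
end
end
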